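/- Let B be a skew brace, H an additive subgroup, G a multiplicative subgroup, and A ⊆ G ∩ H a sub-skew-brace such that H additively normalizes A, G stabilizes A (λ_g(A) = A for all g ∈ G), and either G ∗ H ⊆ A or H ∗ G ⊆ A. Then C := G ∩ H is a sub-skew-brace of B containing A as an ideal, and the quotient skew brace C/A is trivial (its two operations coincide). -/
import Mathlib


/-- A skew (left) brace: a type with an additive group structure `(B,+)` and a
multiplicative group structure `(B,∘)` (written `*`), satisfying the skew left
distributive law `a ∘ (b + c) = a ∘ b − a + a ∘ c`.  Addition is not assumed
commutative. -/
class SkewBrace (B : Type*) extends AddGroup B, Group B where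
  skew_mul_add : ∀ a b c : B, a * (b + c) = a * b + -a + a * c

namespace SkewBrace

variable {B : Type*} [SkewBrace B]

/-- `lam a x = −a + a ∘ x`, the lambda map of a skew brace. -/
def lam (a x : B) : B := -a + a * x

/-- The star operation `a ∗ b = λ_a(b) − b = −a + a ∘ b − b`. -/
def sstar (a b : B) : B := -a + a * b + -b

/-- A sub-skew-brace: a subset closed under both group operations and inverses. -/
def IsSubSkewBrace (C : Set B) : Prop :=
  (0 : B) ∈ C ∧ (∀ a ∈ C, ∀ b ∈ C, a + b ∈ C) ∧ (∀ a ∈ C, -a ∈ C) ∧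
    (∀ a ∈ C, ∀ b ∈ C, a * b ∈ C) ∧ (∀ a ∈ C, a⁻¹ ∈ C)

/-- A subgroup of the additive group `(B,+)`, as a subset. -/
def IsAddSubgroup (S : Set B) : Prop :=
  (0 : B) ∈ S ∧ (∀ a ∈ S, ∀ b ∈ S, a + b ∈ S) ∧ (∀ a ∈ S, -a ∈ S)

/-- A subgroup of the multiplicative group `(B,∘)`, as a subset. -/
def IsMulSubgroup (S : Set B) : Prop :=
  (1 : B) ∈ S ∧ (∀ a ∈ S, ∀ b ∈ S, a * b ∈ S) ∧ (∀ a ∈ S, a⁻¹ ∈ S)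

/-- A strong left ideal: an additively normal, `λ`-invariant additive subgroup. -/
def IsStrongLeftIdeal (J : Set B) : Prop :=
  IsAddSubgroup J ∧ (∀ b : B, ∀ j ∈ J, b + j + -b ∈ J) ∧ (∀ b : B, ∀ j ∈ J, lam b j ∈ J)

/-- An ideal: a sub-skew-brace which is additively normal, `λ`-invariant and
multiplicatively normal. -/
def IsIdeal (I : Set B) : Prop :=
  IsSubSkewBrace I ∧ (∀ b : B, ∀ a ∈ I, b + a + -b ∈ I) ∧
    (∀ b : B, ∀ a ∈ I, lam b a ∈ I) ∧ (∀ b : B, ∀ a ∈ I, b * a * b⁻¹ ∈ I)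

/-- Multiplication of the design group `G(B) = (B,+) ⋊_λ (B,∘)`. -/
def gmul (p q : B × B) : B × B := (p.1 + lam p.2 q.1, p.2 * q.2)

/-- Inversion in the design group `G(B)`. -/
def ginv (p : B × B) : B × B := (-(lam p.2⁻¹ p.1), p.2⁻¹)

/-- For a subset `I ⊆ B`, the subset `G(I) = I × I` of the design group. -/
def designSet (I : Set B) : Set (B × B) := {p | p.1 ∈ I ∧ p.2 ∈ I}

/-- `A` is an ideal of the sub-skew-brace `C`. -/
def IsIdealIn (A C : Set B) : Prop :=
  A ⊆ C ∧ IsSubSkewBrace A ∧ (∀ c ∈ C, ∀ a ∈ A, c + a + -c ∈ A) ∧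
    (∀ c ∈ C, ∀ a ∈ A, lam c a ∈ A) ∧ (∀ c ∈ C, ∀ a ∈ A, c * a * c⁻¹ ∈ A)

lemma mul_zero' (a : B) : a * 0 = a := by
  have h := skew_mul_add a 0 0
  rw [add_zero, add_assoc] at h
  have h2 : -a + a * 0 = 0 := (left_eq_add.mp h)
  have := congrArg (a + ·) h2
  simpa [← add_assoc] using this.symm

lemma one_eq_zero : (1 : B) = 0 := by
  have := mul_zero' (1 : B)
  rw [one_mul] at this
  exact this.symm

lemma mul_eq_add_lam (a x : B) : a * x = a + lam a x := by
  simp [lam, ← add_assoc]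

lemma mul_neg' (a b : B) : a * (-b) = a + -(a * b) + a := by
  have h := skew_mul_add a b (-b)
  rw [add_neg_cancel, mul_zero'] at h
  calc a * (-b) = a + -(a * b) + (a * b + -a + a * (-b)) := by
        simp [add_assoc]
    _ = a + -(a * b) + a := by rw [← h]

lemma lam_lam (a b x : B) : lam a (lam b x) = lam (a * b) x := by
  simp only [lam, skew_mul_add, mul_neg', ← mul_assoc]
  simp [add_assoc]

lemma lam_one (x : B) : lam 1 x = x := by
  rw [lam, one_mul, one_eq_zero, neg_zero, zero_add]

lemma mul_lam_inv (c x : B) : c * lam c⁻¹ x = c + x := by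
  rw [mul_eq_add_lam, lam_lam, mul_inv_cancel, lam_one]

lemma sstar_add_eq_lam (a b : B) : sstar a b + b = lam a b := by
  simp [sstar, lam, add_assoc]

lemma mul_eq_add_sstar (a b : B) : a * b = a + sstar a b + b := by
  rw [add_assoc, sstar_add_eq_lam, ← mul_eq_add_lam]

lemma sstar_inv (c : B) : sstar c c⁻¹ = -c + -c⁻¹ := by
  rw [sstar, mul_inv_cancel, one_eq_zero, add_zero]

lemma sstar_inv' (c : B) : sstar c⁻¹ c = -c⁻¹ + -c := by
  rw [sstar, inv_mul_cancel, one_eq_zero, add_zero]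

lemma conj_formula (c x : B) :
    c * x * c⁻¹ = c + (lam c x + sstar (c * x) c⁻¹ + -(sstar c c⁻¹)) + -c := by
  rw [sstar_inv, mul_eq_add_sstar (c * x) c⁻¹, mul_eq_add_lam c x]
  simp [neg_add_rev, add_assoc]

/-- If `H` is an additive subgroup normalizing `A`, `G` a multiplicative subgroup
stabilizing `A`, `A ⊆ G ∩ H` a sub-skew-brace, and `G ∗ H ⊆ A` or `H ∗ G ⊆ A`,
then `C = G ∩ H` is a sub-skew-brace containing `A` as an ideal with trivial
quotient (i.e. `C ∗ C ⊆ A`). -/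
theorem inter_subbrace_with_trivial_quotient (H G A : Set B)
    (hH : IsAddSubgroup H) (hG : IsMulSubgroup G) (hA : IsSubSkewBrace A)
    (hAsub : A ⊆ G ∩ H)
    (hHnorm : ∀ x ∈ H, {y : B | ∃ a ∈ A, y = x + a + -x} = A)
    (hGstab : ∀ g ∈ G, lam g '' A = A)
    (hstar : (∀ g ∈ G, ∀ h ∈ H, sstar g h ∈ A) ∨ (∀ h ∈ H, ∀ g ∈ G, sstar h g ∈ A)) :
    IsSubSkewBrace (G ∩ H) ∧ IsIdealIn A (G ∩ H) ∧
    ∀ b ∈ G ∩ H, ∀ b' ∈ G ∩ H, sstar b b' ∈ A := by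
  obtain ⟨hH0, hHadd, hHneg⟩ := hH
  obtain ⟨hG1, hGmul, hGinv⟩ := hG
  have hAG : ∀ a ∈ A, a ∈ G := fun a ha => (hAsub ha).1
  have hAH : ∀ a ∈ A, a ∈ H := fun a ha => (hAsub ha).2
  have hconj : ∀ x ∈ H, ∀ a ∈ A, x + a + -x ∈ A := by
    intro x hx a ha
    rw [← hHnorm x hx]
    exact ⟨a, ha, rfl⟩
  have hlamA : ∀ g ∈ G, ∀ a ∈ A, lam g a ∈ A := by
    intro g hg a ha
    rw [← hGstab g hg]
    exact ⟨a, ha, rfl⟩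
  -- C + A ⊆ C
  have hCA : ∀ c, c ∈ G → c ∈ H → ∀ a ∈ A, c + a ∈ G ∩ H := by
    intro c hcG hcH a ha
    constructor
    · have h1 : lam c⁻¹ a ∈ A := hlamA c⁻¹ (hGinv c hcG) a ha
      have h2 := hGmul c hcG _ (hAG _ h1)
      rwa [mul_lam_inv] at h2
    · exact hHadd c hcH a (hAH a ha)
  -- A + C ⊆ C
  have hAC : ∀ c, c ∈ G → c ∈ H → ∀ a ∈ A, a + c ∈ G ∩ H := by
    intro c hcG hcH a ha
    have ha' : -c + a + c ∈ A := by
      have := hconj (-c) (hHneg c hcH) a ha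
      simpa using this
    have := hCA c hcG hcH _ ha'
    simpa [add_assoc] using this
  -- C ∗ C ⊆ A
  have hstarA : ∀ c, c ∈ G → c ∈ H → ∀ d, d ∈ G → d ∈ H → sstar c d ∈ A := by
    rcases hstar with h | h
    · intro c hcG _ d _ hdH; exact h c hcG d hdH
    · intro c _ hcH d hdG _; exact h c hcH d hdG
  have hmulC : ∀ c, c ∈ G → c ∈ H → ∀ d, d ∈ G → d ∈ H → c * d ∈ G ∩ H := by
    intro c hcG hcH d hdG hdH
    refine ⟨hGmul c hcG d hdG, ?_⟩
    rw [mul_eq_add_sstar]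
    exact hHadd _ (hHadd c hcH _ (hAH _ (hstarA c hcG hcH d hdG hdH))) d hdH
  have hinvC : ∀ c, c ∈ G → c ∈ H → c⁻¹ ∈ G ∩ H := by
    intro c hcG hcH
    refine ⟨hGinv c hcG, ?_⟩
    rcases hstar with h | h
    · have ha := h c⁻¹ (hGinv c hcG) c hcH
      rw [sstar_inv'] at ha
      have := hHadd (-c) (hHneg c hcH) _ (hHneg _ (hAH _ ha))
      simpa [neg_add_rev, ← add_assoc] using this
    · have ha := h c hcH c⁻¹ (hGinv c hcG)
      rw [sstar_inv] at ha
      have := hHadd _ (hHneg _ (hAH _ ha)) (-c) (hHneg c hcH)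
      simpa [neg_add_rev, add_assoc] using this
  have hnegC : ∀ c, c ∈ G → c ∈ H → -c ∈ G ∩ H := by
    intro c hcG hcH
    obtain ⟨hiG, hiH⟩ := hinvC c hcG hcH
    have ha := hstarA c hcG hcH c⁻¹ hiG hiH
    rw [sstar_inv] at ha
    have := hAC c⁻¹ hiG hiH _ ha
    simpa [add_assoc] using this
  have haddC : ∀ c, c ∈ G → c ∈ H → ∀ d, d ∈ G → d ∈ H → c + d ∈ G ∩ H := by
    intro c hcG hcH d hdG hdH
    obtain ⟨hiG, hiH⟩ := hinvC c hcG hcH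
    have ha := hstarA c⁻¹ hiG hiH d hdG hdH
    have hl : lam c⁻¹ d ∈ G ∩ H := by
      rw [← sstar_add_eq_lam]
      exact hAC d hdG hdH _ ha
    have := hmulC c hcG hcH _ hl.1 hl.2
    rwa [mul_lam_inv] at this
  refine ⟨⟨⟨by rw [← one_eq_zero]; exact hG1, hH0⟩,
      fun a ha b hb => haddC a ha.1 ha.2 b hb.1 hb.2,
      fun a ha => hnegC a ha.1 ha.2,
      fun a ha b hb => hmulC a ha.1 ha.2 b hb.1 hb.2,
      fun a ha => hinvC a ha.1 ha.2⟩,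
    ⟨hAsub, hA, fun c hc a ha => hconj c hc.2 a ha,
      fun c hc a ha => hlamA c hc.1 a ha, ?_⟩,
    fun b hb b' hb' => hstarA b hb.1 hb.2 b' hb'.1 hb'.2⟩
  intro c hc a ha
  obtain ⟨hcG, hcH⟩ := hc
  obtain ⟨hiG, hiH⟩ := hinvC c hcG hcH
  have hcaC : c * a ∈ G ∩ H := hmulC c hcG hcH a (hAG a ha) (hAH a ha)
  have ha3 : sstar (c * a) c⁻¹ ∈ A := hstarA _ hcaC.1 hcaC.2 _ hiG hiH
  have ha2 : sstar c c⁻¹ ∈ A := hstarA c hcG hcH _ hiG hiH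
  rw [conj_formula]
  exact hconj c hcH _
    (hA.2.1 _ (hA.2.1 _ (hlamA c hcG a ha) _ ha3) _ (hA.2.2.1 _ ha2))


end SkewBrace
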